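/- arXiv:1607.01229 — 8 statements merged into one kernel-verified Lean document; each statement's English description precedes it below -/
import Mathlib

section
/- With u_1 = 2 and u_{i+1} = u_i(u_i - 1) + 1, the series h_∞ = Σ_{i=1}^∞ 1/(u_i - 1) converges and satisfies h_∞ < 1.69104. -/
/-- The sequence u_1 = 2, u_{i+1} = u_i(u_i - 1) + 1 (indexed from 0 here,
so `uSeq 0 = 2, uSeq 1 = 3, uSeq 2 = 7, ...`). -/
def uSeq : ℕ → ℕ
  | 0 => 2
  | n + 1 => uSeq n * (uSeq n - 1) + 1

/-
Since u_{i+1} - 1 = u_i (u_i - 1) with u_i ≥ 2, the terms 1/(u_i - 1) at least halve at each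
step. So the series converges, and its tail from index k is at most 2/(u_k - 1). Summing the
first five terms 1 + 1/2 + 1/6 + 1/42 + 1/1806 exactly and bounding the rest by 2/3263442
gives the estimate.
-/

lemma two_le_uSeq (n : ℕ) : 2 ≤ uSeq n := by
  induction n with
  | zero => rfl
  | succ n ih =>
    simp only [uSeq]
    nlinarith [Nat.sub_add_cancel (by omega : 1 ≤ uSeq n)]

lemma uSeq_succ_sub_one (n : ℕ) :
    (uSeq (n + 1) : ℝ) - 1 = uSeq n * ((uSeq n : ℝ) - 1) := by
  have h : 1 ≤ uSeq n := by linarith [two_le_uSeq n]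
  simp [uSeq, Nat.cast_sub h]

lemma uSeq_sub_one_pos (n : ℕ) : (0 : ℝ) < uSeq n - 1 := by
  have : (2 : ℝ) ≤ uSeq n := by exact_mod_cast two_le_uSeq n
  linarith

lemma uSeq_sub_one_mul_two_pow_le (k i : ℕ) :
    ((uSeq k : ℝ) - 1) * 2 ^ i ≤ uSeq (k + i) - 1 := by
  induction i with
  | zero => simp
  | succ i ih =>
    have h2 : (2 : ℝ) ≤ uSeq (k + i) := by exact_mod_cast two_le_uSeq (k + i)
    calc ((uSeq k : ℝ) - 1) * 2 ^ (i + 1) = 2 * (((uSeq k : ℝ) - 1) * 2 ^ i) := by ring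
      _ ≤ uSeq (k + i) * ((uSeq (k + i) : ℝ) - 1) :=
          mul_le_mul h2 ih (by have := uSeq_sub_one_pos k; positivity) (by linarith)
      _ = uSeq (k + (i + 1)) - 1 := (uSeq_succ_sub_one (k + i)).symm

lemma one_div_uSeq_sub_one_le (k i : ℕ) :
    1 / ((uSeq (i + k) : ℝ) - 1) ≤ 1 / ((uSeq k : ℝ) - 1) * (1 / 2) ^ i := by
  have hk := uSeq_sub_one_pos k
  calc 1 / ((uSeq (i + k) : ℝ) - 1) ≤ 1 / (((uSeq k : ℝ) - 1) * 2 ^ i) := by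
        rw [add_comm]
        exact one_div_le_one_div_of_le (by positivity) (uSeq_sub_one_mul_two_pow_le k i)
    _ = 1 / ((uSeq k : ℝ) - 1) * (1 / 2) ^ i := by rw [one_div_pow, div_mul_div_comm, one_mul]

lemma summable_one_div_uSeq_sub_one :
    Summable (fun i : ℕ => (1 : ℝ) / ((uSeq i : ℝ) - 1)) :=
  (summable_geometric_two.mul_left (1 / ((uSeq 0 : ℝ) - 1))).of_nonneg_of_le
    (fun i => (one_div_pos.mpr (uSeq_sub_one_pos i)).le)
    (fun i => by simpa using one_div_uSeq_sub_one_le 0 i)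

lemma tsum_one_div_uSeq_sub_one_tail_le (k : ℕ) :
    ∑' i : ℕ, (1 : ℝ) / ((uSeq (i + k) : ℝ) - 1) ≤ 2 / ((uSeq k : ℝ) - 1) := by
  calc ∑' i : ℕ, (1 : ℝ) / ((uSeq (i + k) : ℝ) - 1)
        ≤ ∑' i : ℕ, 1 / ((uSeq k : ℝ) - 1) * (1 / 2) ^ i :=
          Summable.tsum_le_tsum (one_div_uSeq_sub_one_le k)
            ((summable_nat_add_iff k).mpr summable_one_div_uSeq_sub_one)
            (summable_geometric_two.mul_left _)
    _ = 2 / ((uSeq k : ℝ) - 1) := by rw [tsum_mul_left, tsum_geometric_two]; ring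

/-- The series h_∞ = Σ_{i≥1} 1/(u_i - 1) converges and h_∞ < 1.69104. -/
theorem stmt0 :
    Summable (fun i : ℕ => (1 : ℝ) / ((uSeq i : ℝ) - 1)) ∧
    (∑' i : ℕ, (1 : ℝ) / ((uSeq i : ℝ) - 1)) < 1.69104 := by
  refine ⟨summable_one_div_uSeq_sub_one, ?_⟩
  rw [← summable_one_div_uSeq_sub_one.sum_add_tsum_nat_add 5]
  have head : ∑ i ∈ Finset.range 5, (1 : ℝ) / ((uSeq i : ℝ) - 1)
      = 1 + 1 / 2 + 1 / 6 + 1 / 42 + 1 / 1806 := by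
    norm_num [Finset.sum_range_succ, uSeq]
  have tail := tsum_one_div_uSeq_sub_one_tail_le 5
  have u5 : uSeq 5 = 3263443 := by norm_num [uSeq]
  rw [u5] at tail
  rw [head]
  norm_num at tail ⊢
  linarith
end

section
/- With λ_1 = 1, λ_2 = 16, λ_3 = 25, λ_4 = 100, λ_5 = 400, λ_6 = 400, λ_7 = 1600, λ_8 = 6400, λ_9 = 6400, λ_10 = 25600 (up to a common positive scaling factor), and sizes s = (1/420−ε, (1/105)(1+ε), (1/84)(1+ε), (1/42)(1+ε), (1/21)(1+ε), (1/20)(1+ε), (1/10)(1+ε), (1/5)(1+ε), (1/4)(1+ε), (1/2)(1+ε)) for sufficiently small ε > 0, the following dominance relations hold: 4²s_1 ≻ s_2, 5²s_1 ≻ s_3, 2²s_3 ≻ s_4, 2²s_4 ≻ s_5, s_5 ≻ s_6, 2²s_6 ≻ s_7, 2²s_7 ≻ s_8, s_8 ≻ s_9, 2²s_9 ≻ s_10. -/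
/-- `m²` items of side `si` (weight `li`) dominate an item of side `sj`
(weight `lj`): `m·si ≤ sj` and `m²·λ_i ≥ λ_j`. -/
def Dominates (m : ℕ) (si sj li lj : ℝ) : Prop :=
  (m : ℝ) * si ≤ sj ∧ (m : ℝ) ^ 2 * li ≥ lj

/-!
Every relation already holds at `ε = 0`. Scaling both sizes by `1 + ε` preserves dominance, and
shrinking the small item to `1/420 - ε` or growing the large one only helps.
-/

namespace Dominates

variable {m : ℕ} {si sj li lj : ℝ}

theorem mono {si' sj' : ℝ} (h : Dominates m si sj li lj) (hi : si' ≤ si) (hj : sj ≤ sj') :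
    Dominates m si' sj' li lj :=
  ⟨(mul_le_mul_of_nonneg_left hi m.cast_nonneg).trans (h.1.trans hj), h.2⟩

theorem mul_right {c : ℝ} (h : Dominates m si sj li lj) (hc : 0 ≤ c) :
    Dominates m (si * c) (sj * c) li lj :=
  ⟨by rw [← mul_assoc]; exact mul_le_mul_of_nonneg_right h.1 hc, h.2⟩

end Dominates

/-- The nine dominance relations used for the 1.680783 square-packing lower bound. -/
theorem stmt3 :
    ∃ ε₀ > (0 : ℝ), ∀ ε : ℝ, 0 < ε → ε < ε₀ →
      Dominates 4 (1/420 - ε) ((1/105) * (1+ε)) 1 16 ∧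
      Dominates 5 (1/420 - ε) ((1/84) * (1+ε)) 1 25 ∧
      Dominates 2 ((1/84) * (1+ε)) ((1/42) * (1+ε)) 25 100 ∧
      Dominates 2 ((1/42) * (1+ε)) ((1/21) * (1+ε)) 100 400 ∧
      Dominates 1 ((1/21) * (1+ε)) ((1/20) * (1+ε)) 400 400 ∧
      Dominates 2 ((1/20) * (1+ε)) ((1/10) * (1+ε)) 400 1600 ∧
      Dominates 2 ((1/10) * (1+ε)) ((1/5) * (1+ε)) 1600 6400 ∧
      Dominates 1 ((1/5) * (1+ε)) ((1/4) * (1+ε)) 6400 6400 ∧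
      Dominates 2 ((1/4) * (1+ε)) ((1/2) * (1+ε)) 6400 25600 := by
  refine ⟨1, one_pos, fun ε hε _ => ?_⟩
  have hscale : 0 ≤ 1 + ε := by linarith
  exact ⟨(show Dominates 4 (1/420) (1/105) 1 16 by norm_num [Dominates]).mono
      (by linarith) (by linarith),
    (show Dominates 5 (1/420) (1/84) 1 25 by norm_num [Dominates]).mono
      (by linarith) (by linarith),
    (show Dominates 2 (1/84) (1/42) 25 100 by norm_num [Dominates]).mul_right hscale,
    (show Dominates 2 (1/42) (1/21) 100 400 by norm_num [Dominates]).mul_right hscale,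
    (show Dominates 1 (1/21) (1/20) 400 400 by norm_num [Dominates]).mul_right hscale,
    (show Dominates 2 (1/20) (1/10) 400 1600 by norm_num [Dominates]).mul_right hscale,
    (show Dominates 2 (1/10) (1/5) 1600 6400 by norm_num [Dominates]).mul_right hscale,
    (show Dominates 1 (1/5) (1/4) 6400 6400 by norm_num [Dominates]).mul_right hscale,
    (show Dominates 2 (1/4) (1/2) 6400 25600 by norm_num [Dominates]).mul_right hscale⟩
end

section
/- In any packing of axis-parallel rectangles of width 1/4 − 300δ, height 1/6 − 2ε ('type 1') and width 1/4 + 100δ, height 1/6 − 2ε ('type 2') into the unit square, where δ, ε > 0 are sufficiently small, one cannot pack more than 24 type-1 items, and one cannot pack 12 type-1 items together with more than 12 type-2 items; moreover the patterns (24 type-1) and (12 type-1, 12 type-2) are both feasible. -/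
/-!
The two impossibility claims follow from area alone: 25 items of type 1, or 12 of type 1
together with 13 of type 2, have total area `25/24 - O(δ + ε) > 1`. The two feasible
patterns are grids of six rows of height `1/6` and four columns: four columns of width `1/4`,
respectively two of width `1/4 - 300δ` and two of width `1/4 + 100δ`.
-/

/-- `RPack w h pos`: the axis-parallel rectangles with widths `w i` and heights
`h i`, placed with lower-left corners `pos i`, lie inside the unit square and
have pairwise disjoint interiors. -/
def RPack {ι : Type*} (w h : ι → ℝ) (pos : ι → ℝ × ℝ) : Prop :=
  (∀ i, 0 ≤ (pos i).1 ∧ (pos i).1 + w i ≤ 1 ∧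
        0 ≤ (pos i).2 ∧ (pos i).2 + h i ≤ 1) ∧
  (∀ i j, i ≠ j →
    (pos i).1 + w i ≤ (pos j).1 ∨ (pos j).1 + w j ≤ (pos i).1 ∨
    (pos i).2 + h i ≤ (pos j).2 ∨ (pos j).2 + h j ≤ (pos i).2)

open MeasureTheory Set Finset

lemma sum_range_add_le_sum_range {f : ℕ → ℝ} (hf : ∀ k, 0 ≤ f k) {c c' : ℕ} (hc : c < c')
    {x : ℝ} (hx : x ≤ f c) : ∑ k ∈ range c, f k + x ≤ ∑ k ∈ range c', f k :=
  calc ∑ k ∈ range c, f k + x ≤ ∑ k ∈ range (c + 1), f k := by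
        rw [sum_range_succ]; gcongr
    _ ≤ ∑ k ∈ range c', f k :=
        sum_le_sum_of_subset_of_nonneg (range_subset_range.2 hc) fun k _ _ => hf k

namespace RPack

section Area

def box (p : ℝ × ℝ) (w h : ℝ) : Set (ℝ × ℝ) :=
  Ioc p.1 (p.1 + w) ×ˢ Ioc p.2 (p.2 + h)

lemma volume_box (p : ℝ × ℝ) {w h : ℝ} (hw : 0 ≤ w) :
    volume (box p w h) = ENNReal.ofReal (w * h) := by
  rw [box, Measure.volume_eq_prod, Measure.prod_prod, Real.volume_Ioc, Real.volume_Ioc,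
    add_sub_cancel_left, add_sub_cancel_left, ENNReal.ofReal_mul hw]

variable {ι : Type*} {w h : ι → ℝ} {pos : ι → ℝ × ℝ}

lemma box_subset_unitSquare (hp : RPack w h pos) (i : ι) :
    box (pos i) (w i) (h i) ⊆ Icc (0 : ℝ) 1 ×ˢ Icc (0 : ℝ) 1 := by
  obtain ⟨hx₀, hx₁, hy₀, hy₁⟩ := hp.1 i
  exact prod_mono (Ioc_subset_Icc_self.trans (Icc_subset_Icc hx₀ hx₁))
    (Ioc_subset_Icc_self.trans (Icc_subset_Icc hy₀ hy₁))

lemma pairwise_disjoint_box (hp : RPack w h pos) :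
    Pairwise (Function.onFun Disjoint fun i => box (pos i) (w i) (h i)) := by
  intro i j hij
  simp only [Function.onFun, box, Set.disjoint_prod]
  rcases hp.2 i j hij with H | H | H | H
  · exact .inl (Ioc_disjoint_Ioc_of_le H)
  · exact .inl (Ioc_disjoint_Ioc_of_le H).symm
  · exact .inr (Ioc_disjoint_Ioc_of_le H)
  · exact .inr (Ioc_disjoint_Ioc_of_le H).symm

theorem sum_mul_le_one [Fintype ι] (hp : RPack w h pos) (hw : ∀ i, 0 ≤ w i)
    (hh : ∀ i, 0 ≤ h i) : ∑ i, w i * h i ≤ 1 := by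
  refine ENNReal.ofReal_le_one.1 ?_
  calc ENNReal.ofReal (∑ i, w i * h i)
      = ∑ i, volume (box (pos i) (w i) (h i)) := by
        rw [ENNReal.ofReal_sum_of_nonneg fun i _ => mul_nonneg (hw i) (hh i)]
        exact sum_congr rfl fun i _ => (volume_box _ (hw i)).symm
    _ = volume (⋃ i, box (pos i) (w i) (h i)) := by
        rw [measure_iUnion hp.pairwise_disjoint_box
          fun _ => measurableSet_Ioc.prod measurableSet_Ioc, tsum_fintype]
    _ ≤ volume (Icc (0 : ℝ) 1 ×ˢ Icc (0 : ℝ) 1) :=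
        measure_mono (iUnion_subset hp.box_subset_unitSquare)
    _ = 1 := by
        rw [Measure.volume_eq_prod, Measure.prod_prod, Real.volume_Icc]
        norm_num

end Area

theorem twoType_area_le {a b a' b' : ℕ} {w₁ w₂ h : ℝ} {pos : Fin (a + b) → ℝ × ℝ}
    (hp : RPack (fun i : Fin (a + b) => if (i : ℕ) < a then w₁ else w₂) (fun _ => h) pos)
    (hw₁ : 0 ≤ w₁) (hw₂ : 0 ≤ w₂) (hh : 0 ≤ h) (ha : a' ≤ a) (hb : b' ≤ b) :
    (a' * w₁ + b' * w₂) * h ≤ 1 := by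
  have harea := hp.sum_mul_le_one (fun i => by split <;> assumption) fun _ => hh
  simp only [← sum_mul, Fin.sum_univ_add, Fin.val_castAdd, Fin.is_lt, if_true,
    Fin.val_natAdd, add_lt_iff_neg_left, Nat.not_lt_zero, if_false, sum_const,
    card_univ, Fintype.card_fin, nsmul_eq_mul] at harea
  refine le_trans ?_ harea
  gcongr

theorem of_grid {ι : Type*} {n m : ℕ} {w h : ι → ℝ} (cw rh : ℕ → ℝ) (col row : ι → ℕ)
    (hcw : ∀ k, 0 ≤ cw k) (hrh : ∀ k, 0 ≤ rh k)
    (hn : ∑ k ∈ range n, cw k ≤ 1) (hm : ∑ k ∈ range m, rh k ≤ 1)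
    (hcol : ∀ i, col i < n) (hrow : ∀ i, row i < m)
    (hw : ∀ i, w i ≤ cw (col i)) (hh : ∀ i, h i ≤ rh (row i))
    (hinj : Function.Injective fun i => (col i, row i)) :
    RPack w h fun i => (∑ k ∈ range (col i), cw k, ∑ k ∈ range (row i), rh k) := by
  refine ⟨fun i => ?_, fun i j hij => ?_⟩
  · dsimp only
    exact ⟨sum_nonneg fun k _ => hcw k,
      (sum_range_add_le_sum_range hcw (hcol i) (hw i)).trans hn,
      sum_nonneg fun k _ => hrh k,
      (sum_range_add_le_sum_range hrh (hrow i) (hh i)).trans hm⟩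
  have hcell : col i ≠ col j ∨ row i ≠ row j := by
    by_contra! H
    exact hij (hinj (Prod.ext H.1 H.2))
  rcases hcell with hc | hr
  · rcases hc.lt_or_gt with hc | hc
    · exact .inl (sum_range_add_le_sum_range hcw hc (hw i))
    · exact .inr (.inl (sum_range_add_le_sum_range hcw hc (hw j)))
  · rcases hr.lt_or_gt with hr | hr
    · exact .inr (.inr (.inl (sum_range_add_le_sum_range hrh hr (hh i))))
    · exact .inr (.inr (.inr (sum_range_add_le_sum_range hrh hr (hh j))))

end RPack

section Patterns

variable {δ ε : ℝ}

lemma exists_rpack_twentyFour (hδ : 0 ≤ δ) (hε : 0 ≤ ε) :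
    ∃ pos : Fin (24 + 0) → ℝ × ℝ,
      RPack (fun i : Fin (24 + 0) => if (i : ℕ) < 24 then 1/4 - 300*δ else 1/4 + 100*δ)
        (fun _ => 1/6 - 2*ε) pos :=
  ⟨_, RPack.of_grid (n := 4) (m := 6) (fun _ => 1/4) (fun _ => 1/6)
    (fun i : Fin (24 + 0) => i % 4) (fun i => i / 4) (fun _ => by norm_num) (fun _ => by norm_num)
    (by norm_num) (by norm_num) (fun i => by omega) (fun i => by omega)
    (fun i => by simp only [i.is_lt, if_true]; linarith) (fun _ => by linarith)
    (fun i j hij => Fin.ext (by simp only [Prod.mk.injEq] at hij; omega))⟩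

lemma exists_rpack_twelve_twelve (hδ : 0 ≤ δ) (hδ' : δ ≤ 1/1200) (hε : 0 ≤ ε) :
    ∃ pos : Fin (12 + 12) → ℝ × ℝ,
      RPack (fun i : Fin (12 + 12) => if (i : ℕ) < 12 then 1/4 - 300*δ else 1/4 + 100*δ)
        (fun _ => 1/6 - 2*ε) pos :=
  ⟨_, RPack.of_grid (n := 4) (m := 6)
    (fun k => if k < 2 then 1/4 - 300*δ else 1/4 + 100*δ) (fun _ => 1/6)
    (fun i : Fin (12 + 12) => i / 6) (fun i => i % 6)
    (fun _ => by split <;> linarith) (fun _ => by norm_num)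
    (by simp only [sum_range_succ, sum_range_zero]; norm_num; linarith) (by norm_num)
    (fun i => by omega) (fun i => by omega)
    (fun i => by
      have h : (i : ℕ) < 12 ↔ (i : ℕ) / 6 < 2 := by omega
      simp only [h, le_refl])
    (fun _ => by linarith)
    (fun i j hij => Fin.ext (by simp only [Prod.mk.injEq] at hij; omega))⟩

end Patterns

/-- Packing facts for type-1 (width 1/4−300δ) and type-2 (width 1/4+100δ)
rectangles of height 1/6−2ε: at most 24 type-1 items; with 12 type-1 items at
most 12 type-2 items; and the patterns (24 type-1) and (12 type-1, 12 type-2)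
are feasible. -/
theorem stmt6 :
    ∃ δ₀ > (0 : ℝ), ∃ ε₀ > (0 : ℝ), ∀ δ ε : ℝ, 0 < δ → δ < δ₀ → 0 < ε → ε < ε₀ →
      (∀ a b : ℕ, ∀ pos : Fin (a + b) → ℝ × ℝ,
        RPack (fun i : Fin (a + b) => if (i : ℕ) < a then 1/4 - 300*δ else 1/4 + 100*δ)
          (fun _ => 1/6 - 2*ε) pos → a ≤ 24) ∧
      (∀ a b : ℕ, ∀ pos : Fin (a + b) → ℝ × ℝ,
        RPack (fun i : Fin (a + b) => if (i : ℕ) < a then 1/4 - 300*δ else 1/4 + 100*δ)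
          (fun _ => 1/6 - 2*ε) pos → 12 ≤ a → b ≤ 12) ∧
      (∃ pos : Fin (24 + 0) → ℝ × ℝ,
        RPack (fun i : Fin (24 + 0) => if (i : ℕ) < 24 then 1/4 - 300*δ else 1/4 + 100*δ)
          (fun _ => 1/6 - 2*ε) pos) ∧
      (∃ pos : Fin (12 + 12) → ℝ × ℝ,
        RPack (fun i : Fin (12 + 12) => if (i : ℕ) < 12 then 1/4 - 300*δ else 1/4 + 100*δ)
          (fun _ => 1/6 - 2*ε) pos) := by
  refine ⟨1/100000, by norm_num, 1/1000, by norm_num, fun δ ε hδ hδ₀ hε hε₀ => ?_⟩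
  have hw₁ : 0 ≤ 1/4 - 300*δ := by linarith
  have hw₂ : 0 ≤ 1/4 + 100*δ := by linarith
  have hh : 0 ≤ 1/6 - 2*ε := by linarith
  refine ⟨fun a b pos hp => ?_, fun a b pos hp ha => ?_, exists_rpack_twentyFour hδ.le hε.le,
    exists_rpack_twelve_twelve hδ.le (by linarith) hε.le⟩
  · by_contra! ha
    have harea := hp.twoType_area_le (a' := 25) (b' := 0) hw₁ hw₂ hh ha b.zero_le
    norm_num at harea
    nlinarith
  · by_contra! hb
    have harea := hp.twoType_area_le (a' := 12) (b' := 13) hw₁ hw₂ hh ha hb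
    norm_num at harea
    nlinarith
end

section
/- Let δ > 0 be sufficiently small, and consider axis-parallel rectangles of type 2 (width 1/4 + 100δ, height 1/6 − 2ε) and type 4 (width 1/4 − 30δ, height 1/3 + ε) in the unit square. Assign weights λ_2 = 48/413 and λ_4 = 72/413. Then the maximum total weight of any non-overlapping packing of such rectangles in the unit square is 864/413, attained by the patterns (18 type-2), (6 type-2, 8 type-4), and (12 type-2, 4 type-4). -/
open MeasureTheory Set
open scoped Finset

theorem sum_mul_length_le_of_forall_sum_le {ι : Type*} (s : Finset ι) {a b M : ℝ} (hab : a ≤ b)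
    (y h c : ι → ℝ) (hh : ∀ i ∈ s, 0 ≤ h i) (hy : ∀ i ∈ s, a ≤ y i ∧ y i + h i ≤ b)
    (hM : ∀ t, ∑ i ∈ s with t ∈ Ioo (y i) (y i + h i), c i ≤ M) :
    ∑ i ∈ s, c i * h i ≤ M * (b - a) := by
  set f : ι → ℝ → ℝ := fun i => (Ioo (y i) (y i + h i)).indicator fun _ => c i
  have hf_int : ∀ i ∈ s, IntegrableOn (f i) (Icc a b) :=
    fun i _ => (integrableOn_const measure_Icc_lt_top.ne).indicator measurableSet_Ioo
  have hf_integral : ∀ i ∈ s, ∫ t in Icc a b, f i t = c i * h i := by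
    intro i hi
    have hsub : Ioo (y i) (y i + h i) ⊆ Icc a b :=
      Ioo_subset_Icc_self.trans (Icc_subset_Icc (hy i hi).1 (hy i hi).2)
    rw [setIntegral_indicator measurableSet_Ioo, inter_eq_self_of_subset_right hsub,
      setIntegral_const, Real.volume_real_Ioo_of_le (by linarith [hh i hi]), smul_eq_mul]
    ring
  have hf_sum : ∀ t, ∑ i ∈ s, f i t ≤ M := fun t => by
    simpa only [f, indicator_apply, Finset.sum_filter] using hM t
  calc ∑ i ∈ s, c i * h i = ∫ t in Icc a b, ∑ i ∈ s, f i t := by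
        rw [integral_finsetSum s hf_int]
        exact Finset.sum_congr rfl fun i hi => (hf_integral i hi).symm
    _ ≤ ∫ _ in Icc a b, M :=
        setIntegral_mono (integrable_finsetSum s hf_int)
          (integrableOn_const measure_Icc_lt_top.ne) hf_sum
    _ = M * (b - a) := by
        rw [setIntegral_const, Real.volume_real_Icc_of_le hab, smul_eq_mul, mul_comm]

theorem sum_length_le_of_pairwiseDisjoint {ι : Type*} (s : Finset ι) {a b : ℝ} (hab : a ≤ b)
    (x w : ι → ℝ) (hw : ∀ i ∈ s, 0 ≤ w i) (hx : ∀ i ∈ s, a ≤ x i ∧ x i + w i ≤ b)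
    (hdisj : (s : Set ι).PairwiseDisjoint fun i => Ioo (x i) (x i + w i)) :
    ∑ i ∈ s, w i ≤ b - a := by
  have hcover : ∀ t, ∑ i ∈ s with t ∈ Ioo (x i) (x i + w i), (1 : ℝ) ≤ 1 := fun t => by
    rw [Finset.sum_const, nsmul_one, Nat.cast_le_one, Finset.card_le_one]
    intro i hi j hj
    simp only [Finset.mem_filter] at hi hj
    by_contra hij
    exact disjoint_left.mp (hdisj hi.1 hj.1 hij) hi.2 hj.2
  simpa using sum_mul_length_le_of_forall_sum_le s hab x w 1 hw hx hcover

theorem RPack.sum_width_crossing_le_one {ι : Type*} [Fintype ι] {w h : ι → ℝ} {pos : ι → ℝ × ℝ}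
    (hp : RPack w h pos) (hw : ∀ i, 0 ≤ w i) (t : ℝ) :
    ∑ i with t ∈ Ioo (pos i).2 ((pos i).2 + h i), w i ≤ 1 := by
  have hdisj : (({i | t ∈ Ioo (pos i).2 ((pos i).2 + h i)} : Finset ι) : Set ι).PairwiseDisjoint
      fun i => Ioo (pos i).1 ((pos i).1 + w i) := by
    intro i hi j hj hij
    simp only [Finset.coe_filter, Finset.mem_univ, true_and, mem_ofPred_eq, mem_Ioo] at hi hj
    rw [Function.onFun, disjoint_left]
    rintro u ⟨hiu, hui⟩ ⟨hju, huj⟩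
    rcases hp.2 i j hij with h' | h' | h' | h' <;> linarith
  simpa using sum_length_le_of_pairwiseDisjoint _ zero_le_one _ w (fun i _ => hw i)
    (fun i _ => ⟨(hp.1 i).1, (hp.1 i).2.1⟩) hdisj

theorem four_mul_add_three_mul_le_twelve {δ : ℝ} (hδ : 0 < δ) (hδ' : δ < 1/600) {m n : ℕ}
    (h : m * (1/4 + 100*δ) + n * (1/4 - 30*δ) ≤ 1) : 4 * m + 3 * n ≤ 12 := by
  have hm : (0 : ℝ) ≤ m := m.cast_nonneg
  have h_le_four : m + n ≤ 4 := by
    by_contra! hmn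
    have : (5 : ℝ) ≤ m + n := by exact_mod_cast hmn
    nlinarith
  have h_le_three : 0 < m → m + n ≤ 3 := by
    intro hm_pos
    by_contra! hmn
    have hsum : (m : ℝ) + n = 4 := by exact_mod_cast (show m + n = 4 by omega)
    have : (1 : ℝ) ≤ m := by exact_mod_cast hm_pos
    nlinarith
  omega

section TwoTypes

variable {ι : Type*} [Fintype ι] (p : ι → Prop) [DecidablePred p] {δ ε : ℝ} {pos : ι → ℝ × ℝ}

theorem RPack.sum_weight_crossing_le {h : ι → ℝ} (hδ : 0 < δ) (hδ' : δ < 1/600)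
    (hp : RPack (fun i => if p i then 1/4 + 100*δ else 1/4 - 30*δ) h pos) (t : ℝ) :
    ∑ i with t ∈ Ioo (pos i).2 ((pos i).2 + h i), (if p i then 4 else 3 : ℝ) ≤ 12 := by
  have hwidth := hp.sum_width_crossing_le_one (fun i => by split_ifs <;> linarith) t
  simp only [Finset.sum_ite, Finset.sum_const, nsmul_eq_mul] at hwidth ⊢
  have hcount := four_mul_add_three_mul_le_twelve hδ hδ' hwidth
  exact_mod_cast (by omega : _ ≤ 12)

theorem RPack.two_mul_card_add_three_mul_card_le (hδ : 0 < δ) (hδ' : δ < 1/600) (hε : 0 ≤ ε)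
    (hε' : ε ≤ 1/1000)
    (hp : RPack (fun i => if p i then 1/4 + 100*δ else 1/4 - 30*δ)
      (fun i => if p i then 1/6 - 2*ε else 1/3 + ε) pos) :
    2 * #{i | p i} + 3 * #{i | ¬ p i} ≤ 36 := by
  have harea := sum_mul_length_le_of_forall_sum_le Finset.univ zero_le_one _ _ _
    (fun i _ => by split_ifs <;> linarith) (fun i _ => ⟨(hp.1 i).2.2.1, (hp.1 i).2.2.2⟩)
    (hp.sum_weight_crossing_le p hδ hδ')
  have hsplit : ∀ i, (if p i then 4 else 3 : ℝ) * (if p i then 1/6 - 2*ε else 1/3 + ε) =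
      if p i then 4 * (1/6 - 2*ε) else 3 * (1/3 + ε) := fun i => by split_ifs <;> rfl
  simp only [hsplit, Finset.sum_ite, Finset.sum_const, nsmul_eq_mul] at harea
  set m : ℕ := #{i | p i}
  set n : ℕ := #{i | ¬ p i}
  have hm : (m : ℝ) ≤ 19 := by nlinarith [n.cast_nonneg (α := ℝ)]
  have h37 : (2 * m + 3 * n : ℝ) < 37 := by
    nlinarith [n.cast_nonneg (α := ℝ), m.cast_nonneg (α := ℝ)]
  have h37' : 2 * m + 3 * n < 37 := by exact_mod_cast h37
  omega

end TwoTypes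

theorem Nat.cast_mul_add_le_or_of_ne {u : ℝ} (hu : 0 ≤ u) {m n : ℕ} (hmn : m ≠ n) :
    m * u + u ≤ n * u ∨ n * u + u ≤ m * u := by
  rcases hmn.lt_or_gt with hlt | hlt
  · left
    have : (m : ℝ) + 1 ≤ n := by exact_mod_cast hlt
    nlinarith
  · right
    have : (n : ℝ) + 1 ≤ m := by exact_mod_cast hlt
    nlinarith

def gridPos (cols : ℕ) (w h y₀ : ℝ) (k : ℕ) : ℝ × ℝ :=
  ((k % cols : ℕ) * w, y₀ + (k / cols : ℕ) * h)

section Grid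

variable {cols rows k l : ℕ} {w h y₀ : ℝ}

theorem gridPos_separated (hw : 0 ≤ w) (hh : 0 ≤ h) (hkl : k ≠ l) :
    (gridPos cols w h y₀ k).1 + w ≤ (gridPos cols w h y₀ l).1 ∨
    (gridPos cols w h y₀ l).1 + w ≤ (gridPos cols w h y₀ k).1 ∨
    (gridPos cols w h y₀ k).2 + h ≤ (gridPos cols w h y₀ l).2 ∨
    (gridPos cols w h y₀ l).2 + h ≤ (gridPos cols w h y₀ k).2 := by
  simp only [gridPos]
  by_cases hcol : k % cols = l % cols
  · have hrow : k / cols ≠ l / cols := fun hrow => hkl <| by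
      rw [← Nat.mod_add_div k cols, ← Nat.mod_add_div l cols, hcol, hrow]
    rcases Nat.cast_mul_add_le_or_of_ne hh hrow with hlt | hlt
    · exact Or.inr (Or.inr (Or.inl (by linarith)))
    · exact Or.inr (Or.inr (Or.inr (by linarith)))
  · rcases Nat.cast_mul_add_le_or_of_ne hw hcol with hlt | hlt
    · exact Or.inl hlt
    · exact Or.inr (Or.inl hlt)

theorem gridPos_mem (hw : 0 ≤ w) (hh : 0 ≤ h) (hk : k < cols * rows) :
    0 ≤ (gridPos cols w h y₀ k).1 ∧ (gridPos cols w h y₀ k).1 + w ≤ cols * w ∧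
    y₀ ≤ (gridPos cols w h y₀ k).2 ∧ (gridPos cols w h y₀ k).2 + h ≤ y₀ + rows * h := by
  have hcols : 0 < cols := Nat.pos_of_ne_zero fun h0 => by simp [h0] at hk
  have hcol : ((k % cols + 1 : ℕ) : ℝ) ≤ cols := by exact_mod_cast Nat.mod_lt k hcols
  have hrow : ((k / cols + 1 : ℕ) : ℝ) ≤ rows := by
    exact_mod_cast Nat.div_lt_iff_lt_mul hcols |>.mpr (by rwa [mul_comm])
  push_cast at hcol hrow
  simp only [gridPos]
  have hrow_nonneg : (0 : ℝ) ≤ (k / cols : ℕ) * h := by positivity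
  exact ⟨by positivity, by nlinarith, by linarith, by nlinarith⟩

end Grid

theorem exists_rpack_two_grids {a b c₁ r₁ c₂ r₂ : ℕ} {w₁ h₁ w₂ h₂ y₁ : ℝ}
    (hw₁ : 0 ≤ w₁) (hh₁ : 0 ≤ h₁) (hw₂ : 0 ≤ w₂) (hh₂ : 0 ≤ h₂)
    (ha : a ≤ c₁ * r₁) (hb : b ≤ c₂ * r₂) (hwidth₁ : c₁ * w₁ ≤ 1) (hwidth₂ : c₂ * w₂ ≤ 1)
    (hbelow : r₂ * h₂ ≤ y₁) (htop : y₁ + r₁ * h₁ ≤ 1) :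
    ∃ pos : Fin (a + b) → ℝ × ℝ,
      RPack (fun i : Fin (a + b) => if (i : ℕ) < a then w₁ else w₂)
        (fun i : Fin (a + b) => if (i : ℕ) < a then h₁ else h₂) pos := by
  refine ⟨fun i => if (i : ℕ) < a then gridPos c₁ w₁ h₁ y₁ i else gridPos c₂ w₂ h₂ 0 (i - a),
    fun i => ?_, fun i j hij => ?_⟩
  · by_cases hi : (i : ℕ) < a
    · simp only [if_pos hi]
      obtain ⟨h1, h2, h3, h4⟩ := gridPos_mem (y₀ := y₁) hw₁ hh₁ (hi.trans_le ha)
      have : (0 : ℝ) ≤ r₂ * h₂ := by positivity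
      exact ⟨h1, h2.trans hwidth₁, by linarith, h4.trans htop⟩
    · simp only [if_neg hi]
      obtain ⟨h1, h2, h3, h4⟩ := gridPos_mem (y₀ := 0) hw₂ hh₂ (by omega : (i : ℕ) - a < c₂ * r₂)
      have : (0 : ℝ) ≤ r₁ * h₁ := by positivity
      exact ⟨h1, h2.trans hwidth₂, h3, by linarith⟩
  · have hij' : (i : ℕ) ≠ j := Fin.val_ne_of_ne hij
    by_cases hi : (i : ℕ) < a <;> by_cases hj : (j : ℕ) < a <;>
      simp only [hi, hj, if_true, if_false]
    · exact gridPos_separated hw₁ hh₁ hij'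
    · obtain ⟨-, -, hi_bot, -⟩ := gridPos_mem (y₀ := y₁) hw₁ hh₁ (hi.trans_le ha)
      obtain ⟨-, -, -, hj_top⟩ := gridPos_mem (y₀ := 0) hw₂ hh₂ (by omega : (j : ℕ) - a < c₂ * r₂)
      exact Or.inr (Or.inr (Or.inr (by linarith)))
    · obtain ⟨-, -, -, hi_top⟩ := gridPos_mem (y₀ := 0) hw₂ hh₂ (by omega : (i : ℕ) - a < c₂ * r₂)
      obtain ⟨-, -, hj_bot, -⟩ := gridPos_mem (y₀ := y₁) hw₁ hh₁ (hj.trans_le ha)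
      exact Or.inr (Or.inr (Or.inl (by linarith)))
    · exact gridPos_separated hw₂ hh₂ (by omega)

/-- With weights λ₂ = 48/413, λ₄ = 72/413, the maximum weight of a packing of
type-2 (width 1/4+100δ, height 1/6−2ε) and type-4 (width 1/4−30δ, height 1/3+ε)
rectangles is 864/413, attained by (18,0), (6,8) and (12,4). -/
theorem stmt7 :
    ∃ δ₀ > (0 : ℝ), ∃ ε₀ > (0 : ℝ), ∀ δ ε : ℝ, 0 < δ → δ < δ₀ → 0 < ε → ε < ε₀ →
      (∀ a b : ℕ, ∀ pos : Fin (a + b) → ℝ × ℝ,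
        RPack (fun i : Fin (a + b) => if (i : ℕ) < a then 1/4 + 100*δ else 1/4 - 30*δ)
          (fun i : Fin (a + b) => if (i : ℕ) < a then 1/6 - 2*ε else 1/3 + ε) pos →
        ((48 : ℝ) * a + 72 * b) / 413 ≤ 864 / 413) ∧
      (∃ pos : Fin (18 + 0) → ℝ × ℝ,
        RPack (fun i : Fin (18 + 0) => if (i : ℕ) < 18 then 1/4 + 100*δ else 1/4 - 30*δ)
          (fun i : Fin (18 + 0) => if (i : ℕ) < 18 then 1/6 - 2*ε else 1/3 + ε) pos) ∧
      (∃ pos : Fin (6 + 8) → ℝ × ℝ,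
        RPack (fun i : Fin (6 + 8) => if (i : ℕ) < 6 then 1/4 + 100*δ else 1/4 - 30*δ)
          (fun i : Fin (6 + 8) => if (i : ℕ) < 6 then 1/6 - 2*ε else 1/3 + ε) pos) ∧
      (∃ pos : Fin (12 + 4) → ℝ × ℝ,
        RPack (fun i : Fin (12 + 4) => if (i : ℕ) < 12 then 1/4 + 100*δ else 1/4 - 30*δ)
          (fun i : Fin (12 + 4) => if (i : ℕ) < 12 then 1/6 - 2*ε else 1/3 + ε) pos) := by
  refine ⟨1/1200, by norm_num, 1/1000, by norm_num, fun δ ε hδ hδ' hε hε' => ?_⟩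
  have hw₁ : (0 : ℝ) ≤ 1/4 + 100*δ := by linarith
  have hh₁ : (0 : ℝ) ≤ 1/6 - 2*ε := by linarith
  have hw₂ : (0 : ℝ) ≤ 1/4 - 30*δ := by linarith
  have hh₂ : (0 : ℝ) ≤ 1/3 + ε := by linarith
  refine ⟨fun a b pos hp => ?_,
    exists_rpack_two_grids (c₁ := 3) (r₁ := 6) (c₂ := 0) (r₂ := 0) (y₁ := 0) hw₁ hh₁ hw₂ hh₂
      le_rfl le_rfl (by push_cast; linarith) (by simp) (by simp) (by push_cast; linarith),
    exists_rpack_two_grids (c₁ := 3) (r₁ := 2) (c₂ := 4) (r₂ := 2) (y₁ := 2/3 + 2*ε) hw₁ hh₁ hw₂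
      hh₂ (by norm_num) le_rfl (by push_cast; linarith) (by push_cast; linarith)
      (by push_cast; linarith) (by push_cast; linarith),
    exists_rpack_two_grids (c₁ := 3) (r₁ := 4) (c₂ := 4) (r₂ := 1) (y₁ := 1/3 + ε) hw₁ hh₁ hw₂
      hh₂ le_rfl le_rfl (by push_cast; linarith) (by push_cast; linarith)
      (by push_cast; linarith) (by push_cast; linarith)⟩
  let isType2 : Fin (a + b) → Prop := fun i => (i : ℕ) < a
  have hcount := hp.two_mul_card_add_three_mul_card_le isType2 hδ (by linarith) hε.le hε'.le
  have hcard := Finset.card_filter_add_card_filter_not (s := Finset.univ) isType2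
  rw [Finset.card_univ, Fintype.card_fin, Fin.card_filter_val_lt, min_eq_right (by omega)] at hcard
  rw [Fin.card_filter_val_lt, min_eq_right (by omega)] at hcount
  have h36 : (2 * a + 3 * b : ℝ) ≤ 36 := by exact_mod_cast (by omega : 2 * a + 3 * b ≤ 36)
  rw [div_le_div_iff_of_pos_right (by norm_num)]
  linarith
end

section
/- In the unit square, consider axis-parallel rectangles of type 3 (width 1/2 + 200δ, height 1/6 − 2ε) and type 4 (width 1/4 − 30δ, height 1/3 + ε), for sufficiently small δ, ε > 0. With weights λ_3 = 96/413 and λ_4 = 72/413, the maximum weight of any non-overlapping packing using only these types is 816/413, attained by the pattern with 4 type-3 and 6 type-4 items. -/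
/-!
The items crossing a horizontal line sit side by side, so their widths sum to at most 1; integrating
over the height of the line turns such pointwise bounds into bounds on weighted sums of heights.
A type-3 item is wider than 1/2, so at most one crosses any horizontal line, and since
`(1/2 + 200δ) + 2 (1/4 - 30δ) > 1` it then shares the line with at most one type-4 item. Hence the
weights `1 - w₄` on type-3 and `w₄` on type-4 items sum to at most 1 along every line, and
integrating gives `a (1 - w₄) h₃ + b w₄ h₄ ≤ 1`, roughly `a/8 + b/12 ≤ 1`. Together with `a ≤ 6`
(all type-3 items cross the line `x = 1/2`) and `b ≤ 8` (an item taller than 1/3 crosses `y = 1/3`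
or `y = 2/3`), this forces `4a + 3b ≤ 34`.
-/

open MeasureTheory Set Finset

theorem sum_mul_le_one_of_forall_sum_le_one {ι : Type*} (s : Finset ι) (x ℓ c : ι → ℝ)
    (hx : ∀ i ∈ s, 0 ≤ x i) (hxℓ : ∀ i ∈ s, x i + ℓ i ≤ 1) (hℓ : ∀ i ∈ s, 0 ≤ ℓ i)
    (hc : ∀ y, ∑ i ∈ s with y ∈ Ioo (x i) (x i + ℓ i), c i ≤ 1) :
    ∑ i ∈ s, c i * ℓ i ≤ 1 := by
  set g : ℝ → ℝ := fun y => ∑ i ∈ s, (Ioo (x i) (x i + ℓ i)).indicator (fun _ => c i) y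
  have hg : Integrable g := integrable_finsetSum s fun i _ =>
    (integrableOn_const (by simp)).integrable_indicator measurableSet_Ioo
  have hg_le : g ≤ (Icc (0 : ℝ) 1).indicator 1 := by
    intro y
    by_cases hy : y ∈ Icc (0 : ℝ) 1
    · simpa [g, hy, indicator_apply, Finset.sum_filter] using hc y
    · have hsupp : ∀ i ∈ s, y ∉ Ioo (x i) (x i + ℓ i) := fun i hi hyi =>
        hy ⟨(hx i hi).trans hyi.1.le, hyi.2.le.trans (hxℓ i hi)⟩
      simp [g, hy, Finset.sum_eq_zero fun i hi => indicator_of_notMem (hsupp i hi) _]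
  calc ∑ i ∈ s, c i * ℓ i = ∫ y, g y := by
        rw [integral_finsetSum s fun i _ =>
          (integrableOn_const (by simp)).integrable_indicator measurableSet_Ioo]
        refine Finset.sum_congr rfl fun i hi => ?_
        rw [integral_indicator_const _ measurableSet_Ioo,
          Real.volume_real_Ioo_of_le (by linarith [hℓ i hi])]
        simp [mul_comm]
    _ ≤ ∫ y, (Icc (0 : ℝ) 1).indicator 1 y :=
        integral_mono hg
          ((integrableOn_const (by simp)).integrable_indicator measurableSet_Icc) hg_le
    _ = 1 := by simp

theorem sum_le_one_of_pairwise_separated {ι : Type*} (s : Finset ι) (x ℓ : ι → ℝ)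
    (hx : ∀ i ∈ s, 0 ≤ x i) (hxℓ : ∀ i ∈ s, x i + ℓ i ≤ 1) (hℓ : ∀ i ∈ s, 0 ≤ ℓ i)
    (hsep : (s : Set ι).Pairwise fun i j => x i + ℓ i ≤ x j ∨ x j + ℓ j ≤ x i) :
    ∑ i ∈ s, ℓ i ≤ 1 := by
  simpa using sum_mul_le_one_of_forall_sum_le_one s x ℓ 1 hx hxℓ hℓ fun y => by
    have : #{i ∈ s | y ∈ Ioo (x i) (x i + ℓ i)} ≤ 1 := by
      refine Finset.card_le_one.2 fun i hi j hj => by_contra fun hij => ?_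
      simp only [Finset.mem_filter, Set.mem_Ioo] at hi hj
      rcases hsep hi.1 hj.1 hij with h | h <;> linarith [hi.2.1, hi.2.2, hj.2.1, hj.2.2]
    simpa using this

namespace RPack

variable {ι : Type*} {w h : ι → ℝ} {pos : ι → ℝ × ℝ}

theorem swap (hp : RPack w h pos) : RPack h w fun i => (pos i).swap := by
  refine ⟨fun i => ?_, fun i j hij => ?_⟩
  · obtain ⟨h1, h2, h3, h4⟩ := hp.1 i
    exact ⟨h3, h4, h1, h2⟩
  · rcases hp.2 i j hij with h | h | h | h <;> simp [h]

theorem sum_width_le_one (hp : RPack w h pos) (s : Finset ι) (hw : ∀ i ∈ s, 0 ≤ w i) (y : ℝ)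
    (hy : ∀ i ∈ s, y ∈ Ioo (pos i).2 ((pos i).2 + h i)) :
    ∑ i ∈ s, w i ≤ 1 := by
  refine sum_le_one_of_pairwise_separated s (fun i => (pos i).1) w (fun i _ => (hp.1 i).1)
    (fun i _ => (hp.1 i).2.1) hw fun i hi j hj hij => ?_
  have hyi := hy i hi
  have hyj := hy j hj
  simp only [Set.mem_Ioo] at hyi hyj
  rcases hp.2 i j hij with h | h | h | h
  · exact Or.inl h
  · exact Or.inr h
  all_goals linarith

theorem sum_height_le_one (hp : RPack w h pos) (s : Finset ι) (hh : ∀ i ∈ s, 0 ≤ h i) (x : ℝ)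
    (hx : ∀ i ∈ s, x ∈ Ioo (pos i).1 ((pos i).1 + w i)) :
    ∑ i ∈ s, h i ≤ 1 :=
  hp.swap.sum_width_le_one s hh x hx

theorem sum_height_le_one_of_half_lt_width (hp : RPack w h pos) (s : Finset ι)
    (hh : ∀ i ∈ s, 0 ≤ h i) (hw : ∀ i ∈ s, 1 / 2 < w i) :
    ∑ i ∈ s, h i ≤ 1 :=
  hp.sum_height_le_one s hh (1 / 2) fun i hi => by
    obtain ⟨h1, h2, -, -⟩ := hp.1 i
    have := hw i hi
    constructor <;> linarith

theorem sum_width_le_two_of_third_lt_height (hp : RPack w h pos) (s : Finset ι)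
    (hw : ∀ i ∈ s, 0 ≤ w i) (hh : ∀ i ∈ s, 1 / 3 < h i) :
    ∑ i ∈ s, w i ≤ 2 := by
  have hlow : ∑ i ∈ s with (pos i).2 < 1 / 3, w i ≤ 1 :=
    hp.sum_width_le_one _ (fun i hi => hw i (Finset.mem_filter.1 hi).1) (1 / 3) fun i hi => by
      obtain ⟨hi, hlt⟩ := Finset.mem_filter.1 hi
      have := hh i hi
      have := (hp.1 i).2.2.1
      constructor <;> linarith
  have hhigh : ∑ i ∈ s with ¬(pos i).2 < 1 / 3, w i ≤ 1 :=
    hp.sum_width_le_one _ (fun i hi => hw i (Finset.mem_filter.1 hi).1) (2 / 3) fun i hi => by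
      obtain ⟨hi, hge⟩ := Finset.mem_filter.1 hi
      have := hh i hi
      have := (hp.1 i).2.2.2
      constructor <;> linarith [not_lt.1 hge]
  linarith [Finset.sum_filter_add_sum_filter_not s (fun i => (pos i).2 < 1 / 3) w]

end RPack

theorem natCast_mul_one_sub_add_le_one {m n : ℕ} {w₃ w₄ : ℝ} (hw₃ : 1 < 2 * w₃)
    (hw : 1 < w₃ + 2 * w₄) (hw₄ : 0 < w₄) (h : m * w₃ + n * w₄ ≤ 1) :
    m * (1 - w₄) + n * w₄ ≤ 1 := by
  have hm : m ≤ 1 := by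
    by_contra! hm
    have : (2 : ℝ) ≤ m := by exact_mod_cast hm
    nlinarith
  interval_cases m
  · simpa using h
  · have hn : n ≤ 1 := by
      by_contra! hn
      have : (2 : ℝ) ≤ n := by exact_mod_cast hn
      push_cast at h
      nlinarith
    have : (n : ℝ) ≤ 1 := by exact_mod_cast hn
    push_cast
    nlinarith

section TwoTypes

variable {ι : Type*} [Fintype ι] (p : ι → Prop) [DecidablePred p] {w₃ h₃ w₄ h₄ : ℝ}
  {pos : ι → ℝ × ℝ}

theorem RPack.card_mul_le_one_of_half_lt
    (hp : RPack (fun i => if p i then w₃ else w₄) (fun i => if p i then h₃ else h₄) pos)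
    (hw₃ : 1 / 2 < w₃) (hh₃ : 0 ≤ h₃) :
    #{i | p i} * h₃ ≤ 1 := by
  have := hp.sum_height_le_one_of_half_lt_width {i | p i}
    (fun i hi => by rwa [if_pos (Finset.mem_filter.1 hi).2])
    (fun i hi => by rwa [if_pos (Finset.mem_filter.1 hi).2])
  rwa [Finset.sum_congr rfl fun i hi => if_pos (Finset.mem_filter.1 hi).2, Finset.sum_const,
    nsmul_eq_mul] at this

theorem RPack.card_mul_le_two_of_third_lt
    (hp : RPack (fun i => if p i then w₃ else w₄) (fun i => if p i then h₃ else h₄) pos)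
    (hw₄ : 0 ≤ w₄) (hh₄ : 1 / 3 < h₄) :
    #{i | ¬p i} * w₄ ≤ 2 := by
  have := hp.sum_width_le_two_of_third_lt_height {i | ¬p i}
    (fun i hi => by rwa [if_neg (Finset.mem_filter.1 hi).2])
    (fun i hi => by rwa [if_neg (Finset.mem_filter.1 hi).2])
  rwa [Finset.sum_congr rfl fun i hi => if_neg (Finset.mem_filter.1 hi).2, Finset.sum_const,
    nsmul_eq_mul] at this

theorem RPack.card_mul_add_card_mul_le_one
    (hp : RPack (fun i => if p i then w₃ else w₄) (fun i => if p i then h₃ else h₄) pos)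
    (hw₃ : 1 < 2 * w₃) (hw : 1 < w₃ + 2 * w₄) (hw₄ : 0 < w₄) (hh₃ : 0 ≤ h₃) (hh₄ : 0 ≤ h₄) :
    #{i | p i} * ((1 - w₄) * h₃) + #{i | ¬p i} * (w₄ * h₄) ≤ 1 := by
  have key := sum_mul_le_one_of_forall_sum_le_one univ (fun i => (pos i).2)
    (fun i => if p i then h₃ else h₄) (fun i => if p i then 1 - w₄ else w₄)
    (fun i _ => (hp.1 i).2.2.1) (fun i _ => (hp.1 i).2.2.2)
    (fun i _ => by split_ifs <;> assumption) fun y => by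
      have hwidth := hp.sum_width_le_one
        {i | y ∈ Ioo (pos i).2 ((pos i).2 + if p i then h₃ else h₄)}
        (fun i _ => by split_ifs <;> linarith) y fun i hi => (Finset.mem_filter.1 hi).2
      simp only [Finset.sum_ite, Finset.sum_const, nsmul_eq_mul] at hwidth ⊢
      exact natCast_mul_one_sub_add_le_one hw₃ hw hw₄ hwidth
  calc _ = ∑ i, if p i then (1 - w₄) * h₃ else w₄ * h₄ := by
        rw [Finset.sum_ite, Finset.sum_const, Finset.sum_const, nsmul_eq_mul, nsmul_eq_mul]
    _ = ∑ i, (if p i then 1 - w₄ else w₄) * (if p i then h₃ else h₄) :=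
        Finset.sum_congr rfl fun i _ => by split_ifs <;> rfl
    _ ≤ 1 := key

end TwoTypes

theorem weight_le_of_rPack {δ ε : ℝ} (hδ : 0 < δ) (hδ' : δ < 1 / 10000) (hε : 0 < ε)
    (hε' : ε < 1 / 10000) {a b : ℕ} {pos : Fin (a + b) → ℝ × ℝ}
    (hp : RPack (fun i : Fin (a + b) => if (i : ℕ) < a then 1/2 + 200*δ else 1/4 - 30*δ)
      (fun i : Fin (a + b) => if (i : ℕ) < a then 1/6 - 2*ε else 1/3 + ε) pos) :
    (96 : ℝ) * a + 72 * b ≤ 816 := by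
  have hcard₃ : #{i : Fin (a + b) | (i : ℕ) < a} = a := by simp [Fin.card_filter_val_lt]
  have hcard₄ : #{i : Fin (a + b) | ¬(i : ℕ) < a} = b := by
    have := Finset.card_filter_add_card_filter_not (s := univ) fun i : Fin (a + b) => (i : ℕ) < a
    simp only [hcard₃, card_univ, Fintype.card_fin] at this
    omega
  have ha : a ≤ 6 := by
    have := hp.card_mul_le_one_of_half_lt _ (by linarith) (by linarith)
    rw [hcard₃] at this
    by_contra! ha
    have : (7 : ℝ) ≤ a := by exact_mod_cast ha
    nlinarith
  have hb : b ≤ 8 := by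
    have := hp.card_mul_le_two_of_third_lt _ (by linarith) (by linarith)
    rw [hcard₄] at this
    by_contra! hb
    have : (9 : ℝ) ≤ b := by exact_mod_cast hb
    nlinarith
  have harea := hp.card_mul_add_card_mul_le_one _ (by linarith) (by linarith) (by linarith)
    (by linarith) (by linarith)
  rw [hcard₃, hcard₄] at harea
  by_contra! hweight
  have h25 : (25 : ℝ) ≤ 3 * a + 2 * b := by
    have : 35 ≤ 4 * a + 3 * b := by
      have : (34 : ℝ) < 4 * a + 3 * b := by linarith
      exact_mod_cast this
    exact_mod_cast (by omega : 25 ≤ 3 * a + 2 * b)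
  have ha' : (a : ℝ) ≤ 6 := by exact_mod_cast ha
  have hb' : (b : ℝ) ≤ 8 := by exact_mod_cast hb
  -- `(1 - w₄) h₃ ≈ 1/8` and `w₄ h₄ ≈ 1/12`, so `harea` reads `3a + 2b ≲ 24`
  nlinarith [mul_pos hδ hε]

set_option maxHeartbeats 800000 in
theorem exists_rPack_four_six {δ ε : ℝ} (hδ : 0 < δ) (hδ' : δ < 1 / 10000) (hε : 0 < ε)
    (hε' : ε < 1 / 10000) :
    ∃ pos : Fin (4 + 6) → ℝ × ℝ,
      RPack (fun i : Fin (4 + 6) => if (i : ℕ) < 4 then 1/2 + 200*δ else 1/4 - 30*δ)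
        (fun i : Fin (4 + 6) => if (i : ℕ) < 4 then 1/6 - 2*ε else 1/3 + ε) pos := by
  -- four type-4 items side by side along the bottom edge; above them the type-3 items stacked in a
  -- column, the lower two flanked on the left and the upper two on the right by a type-4 item
  refine ⟨![(1/4 - 30*δ, 1/3 + ε), (1/4 - 30*δ, 1/2 - ε), (1/4 - 170*δ, 2/3 + 2*ε),
    (1/4 - 170*δ, 5/6), (0, 0), (1/4 - 30*δ, 0), (1/2 - 60*δ, 0), (3/4 - 90*δ, 0),
    (0, 1/3 + ε), (3/4 + 30*δ, 2/3 - ε)], fun i => ?_, fun i j hij => ?_⟩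
  · fin_cases i <;> refine ⟨?_, ?_, ?_, ?_⟩ <;> norm_num
    all_goals linarith
  · fin_cases i <;> fin_cases j <;> first
      | exact absurd rfl hij
      | (norm_num <;> by_contra! h <;> casesm* _ ∧ _ <;> linarith)

/-- With weights λ₃ = 96/413, λ₄ = 72/413, the maximum weight of a packing of
type-3 (width 1/2+200δ, height 1/6−2ε) and type-4 (width 1/4−30δ, height 1/3+ε)
rectangles is 816/413, attained by (4 type-3, 6 type-4). -/
theorem stmt10 :
    ∃ δ₀ > (0 : ℝ), ∃ ε₀ > (0 : ℝ), ∀ δ ε : ℝ, 0 < δ → δ < δ₀ → 0 < ε → ε < ε₀ →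
      (∀ a b : ℕ, ∀ pos : Fin (a + b) → ℝ × ℝ,
        RPack (fun i : Fin (a + b) => if (i : ℕ) < a then 1/2 + 200*δ else 1/4 - 30*δ)
          (fun i : Fin (a + b) => if (i : ℕ) < a then 1/6 - 2*ε else 1/3 + ε) pos →
        ((96 : ℝ) * a + 72 * b) / 413 ≤ 816 / 413) ∧
      (∃ pos : Fin (4 + 6) → ℝ × ℝ,
        RPack (fun i : Fin (4 + 6) => if (i : ℕ) < 4 then 1/2 + 200*δ else 1/4 - 30*δ)
          (fun i : Fin (4 + 6) => if (i : ℕ) < 4 then 1/6 - 2*ε else 1/3 + ε) pos) := by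
  refine ⟨1 / 10000, by norm_num, 1 / 10000, by norm_num, fun δ ε hδ hδ' hε hε' =>
    ⟨fun a b pos hp => ?_, exists_rPack_four_six hδ hδ' hε hε'⟩⟩
  exact div_le_div_of_nonneg_right (weight_le_of_rPack hδ hδ' hε hε' hp) (by norm_num)
end

section
/- Fix d ≥ 2 and parameters 1/3 = y_0 < y_1 < ⋯ < y_h < y_{h+1} = 1/2 and m_1,…,m_h ≥ 1. Suppose R satisfies, for all j ∈ {1,…,h}: (i) R ≥ 2 + (1 − 1/m_j)(1 − 1/2^d) − 1/2^d − (2^d − 1)y_{h−j}^d; (ii) R ≥ 2 + 1/m_j + (1 − 1/m_j)(1 − 1/2^d) − (1 − y_{h−j+1})^d − (2^d − 1)y_{h−j}^d; and (iii) R ≥ 3 − 1/2^{d−1} − (2^d − 1)y_h^d. Then R ≥ 3 − 2(2^d − 1)/3^d − (2^d + 1)/4^d. -/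
/-!
For `j = h` the inequalities (i) and (ii) involve only `y₀ = 1/3` and `y₁`. Adding `2⁻ᵈ`·(i) and
`(1 - 2⁻ᵈ)`·(ii) cancels the red fraction `1/m_h` and leaves
`R ≥ 3 - 2⁻ᵈ - 4⁻ᵈ - (2ᵈ - 1)/3ᵈ - (1 - 2⁻ᵈ)(1 - y₁)ᵈ`, where the last term is at most
`(2ᵈ - 1)/3ᵈ` because `1/3 < y₁ ≤ 1/2`.
-/

lemma le_of_red_fraction_bounds {R a u c E : ℝ} (hu₀ : 0 ≤ u) (hu₁ : u ≤ 1)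
    (hE : (1 - u) * E ≤ c)
    (h₁ : 2 + (1 - a) * (1 - u) - u - c ≤ R)
    (h₂ : 2 + a + (1 - a) * (1 - u) - E - c ≤ R) :
    3 - 2 * c - u - u ^ 2 ≤ R := by
  linarith [mul_le_mul_of_nonneg_left h₁ hu₀, mul_le_mul_of_nonneg_left h₂ (sub_nonneg.2 hu₁)]

lemma one_sub_inv_two_pow_mul_pow_le (d : ℕ) {x : ℝ} (hx₀ : 0 ≤ x) (hx : x ≤ 2 / 3) :
    (1 - 1 / 2 ^ d) * x ^ d ≤ (2 ^ d - 1) / 3 ^ d := by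
  have h2d : (0 : ℝ) < 2 ^ d := by positivity
  calc (1 - 1 / 2 ^ d) * x ^ d ≤ (1 - 1 / 2 ^ d) * (2 / 3) ^ d := by
        gcongr
        exact sub_nonneg.2 (div_le_one_of_le₀ (one_le_pow₀ one_le_two) h2d.le)
    _ = (2 ^ d - 1) / 3 ^ d := by rw [div_pow]; field_simp

theorem stmt12_general (d h : ℕ) (hh : 1 ≤ h)
    (y : ℕ → ℝ) (m : ℕ → ℝ) (R : ℝ)
    (hy0 : y 0 = 1/3) (hyh1 : y (h + 1) = 1/2)
    (hymono : ∀ j ≤ h, y j < y (j + 1))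
    (hineq1 : ∀ j, 1 ≤ j → j ≤ h →
      R ≥ 2 + (1 - 1 / m j) * (1 - 1 / 2 ^ d) - 1 / 2 ^ d -
        (2 ^ d - 1) * (y (h - j)) ^ d)
    (hineq2 : ∀ j, 1 ≤ j → j ≤ h →
      R ≥ 2 + 1 / m j + (1 - 1 / m j) * (1 - 1 / 2 ^ d) -
        (1 - y (h - j + 1)) ^ d - (2 ^ d - 1) * (y (h - j)) ^ d) :
    R ≥ 3 - 2 * (2 ^ d - 1) / 3 ^ d - (2 ^ d + 1) / 4 ^ d := by
  have hy₁ : 1 / 3 < y 1 := hy0 ▸ hymono 0 h.zero_le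
  have hy₁_le : y 1 ≤ 1 / 2 := hyh1 ▸
    (strictMonoOn_Iic_of_lt_succ (ψ := y) (n := h + 1) fun j hj ↦
      Order.succ_eq_add_one j ▸ hymono j (Nat.lt_succ_iff.1 hj)).monotoneOn
      (Set.mem_Iic.2 (by omega)) (Set.mem_Iic.2 le_rfl) (by omega)
  have h₁ := hineq1 h hh le_rfl
  have h₂ := hineq2 h hh le_rfl
  simp only [Nat.sub_self, zero_add, hy0, div_pow, one_pow, mul_one_div] at h₁ h₂
  have h4d : (2 ^ d + 1 : ℝ) / 4 ^ d = 1 / 2 ^ d + (1 / 2 ^ d) ^ 2 := by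
    rw [show (4 : ℝ) ^ d = (2 ^ d) ^ 2 by rw [← pow_mul, mul_comm, pow_mul]; norm_num]
    field_simp
  have hE := one_sub_inv_two_pow_mul_pow_le d (x := 1 - y 1) (by linarith) (by linarith)
  have hR := le_of_red_fraction_bounds (by positivity)
    (div_le_one_of_le₀ (one_le_pow₀ one_le_two) (by positivity)) hE h₁ h₂
  rw [h4d, mul_div_assoc]
  linarith

/-- Combined lower bound for Harmonic-type hypercube packing algorithms: any R
satisfying the three families of inequalities (for parameters y_j, m_j) is at
least 3 − 2(2^d−1)/3^d − (2^d+1)/4^d. -/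
theorem stmt12 (d h : ℕ) (hd : 2 ≤ d) (hh : 1 ≤ h)
    (y : ℕ → ℝ) (m : ℕ → ℝ) (R : ℝ)
    (hy0 : y 0 = 1/3) (hyh1 : y (h + 1) = 1/2)
    (hymono : ∀ j ≤ h, y j < y (j + 1))
    (hm : ∀ j, 1 ≤ j → j ≤ h → 1 ≤ m j)
    (hineq1 : ∀ j, 1 ≤ j → j ≤ h →
      R ≥ 2 + (1 - 1 / m j) * (1 - 1 / 2 ^ d) - 1 / 2 ^ d -
        (2 ^ d - 1) * (y (h - j)) ^ d)
    (hineq2 : ∀ j, 1 ≤ j → j ≤ h →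
      R ≥ 2 + 1 / m j + (1 - 1 / m j) * (1 - 1 / 2 ^ d) -
        (1 - y (h - j + 1)) ^ d - (2 ^ d - 1) * (y (h - j)) ^ d)
    (hineq3 : R ≥ 3 - 1 / 2 ^ (d - 1) - (2 ^ d - 1) * (y h) ^ d) :
    R ≥ 3 - 2 * (2 ^ d - 1) / 3 ^ d - (2 ^ d + 1) / 4 ^ d :=
  stmt12_general d h hh y m R hy0 hyh1 hymono hineq1 hineq2
end

section
/- For d = 2 and α = (197 − √36541)/27, the two functions f(α) = (213 − 2α)/(9(12 − α)) and g(α) = (26 − 9α)/12 are equal, and their common value exceeds 2.0043. Moreover f is strictly increasing and g is strictly decreasing on [0,1], so min_{α∈[0,1]} max(f(α), g(α)) = f(α*) = g(α*) with α* = (197 − √36541)/27 ≈ 0.2164. -/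
/-!
Writing `f a = 2/9 + 21/(12 - a)` shows that `f` increases on `[0,1]`, while `g` is affine with
negative slope, so `max f g` is minimised where the two graphs cross. Clearing denominators,
`f a = g a` becomes `27 a² - 394 a + 84 = 0`, whose smaller root is `α*`; the value there is
`g α* = (√36541 - 119)/36`, and `√36541 > 191.155` gives the bound.
-/

theorem MonotoneOn.le_max_of_eq_of_antitoneOn {α β : Type*} [LinearOrder α] [LinearOrder β]
    {f g : α → β} {s : Set α} (hf : MonotoneOn f s) (hg : AntitoneOn g s) {x : α} (hx : x ∈ s)
    (hfg : f x = g x) {a : α} (ha : a ∈ s) : f x ≤ max (f a) (g a) := by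
  rcases le_total x a with hxa | hax
  · exact le_max_of_le_left (hf hx ha hxa)
  · exact le_max_of_le_right (hfg ▸ hg ha hx hax)

namespace ClassB1

noncomputable def f (a : ℝ) : ℝ := (213 - 2 * a) / (9 * (12 - a))

noncomputable def g (a : ℝ) : ℝ := (26 - 9 * a) / 12

noncomputable def αStar : ℝ := (197 - √36541) / 27

theorem strictMonoOn_f : StrictMonoOn f (Set.Iio 12) := by
  intro a ha b hb hab
  have ha' : (0 : ℝ) < 9 * (12 - a) := by linarith [Set.mem_Iio.mp ha]
  have hb' : (0 : ℝ) < 9 * (12 - b) := by linarith [Set.mem_Iio.mp hb]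
  rw [f, f, div_lt_div_iff₀ ha' hb']
  nlinarith

theorem strictAnti_g : StrictAnti g := by
  intro a b hab
  simp only [g]
  linarith

theorem f_eq_g_iff {a : ℝ} (ha : a ≠ 12) : f a = g a ↔ 27 * a ^ 2 - 394 * a + 84 = 0 := by
  have hden : 9 * (12 - a) ≠ 0 := by
    intro h
    exact ha (by linarith)
  rw [f, g, div_eq_div_iff hden (by norm_num)]
  constructor <;> intro h <;> linarith

theorem αStar_isRoot : 27 * αStar ^ 2 - 394 * αStar + 84 = 0 := by
  have hsq : √36541 ^ 2 = 36541 := Real.sq_sqrt (by norm_num)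
  simp only [αStar]
  linear_combination hsq / 27

theorem sqrt_36541_mem : √36541 ∈ Set.Ioo (191.155 : ℝ) 192 := by
  constructor
  · rw [Real.lt_sqrt (by norm_num)]
    norm_num
  · rw [Real.sqrt_lt' (by norm_num)]
    norm_num

theorem αStar_mem_Icc : αStar ∈ Set.Icc (0 : ℝ) 1 := by
  obtain ⟨hlo, hhi⟩ := sqrt_36541_mem
  constructor <;> simp only [αStar] <;> linarith

theorem f_αStar_eq_g_αStar : f αStar = g αStar :=
  (f_eq_g_iff (by linarith [αStar_mem_Icc.2])).mpr αStar_isRoot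

theorem f_αStar_gt : f αStar > 2.0043 := by
  have hval : g αStar = (√36541 - 119) / 36 := by
    simp only [g, αStar]
    ring
  rw [f_αStar_eq_g_αStar, hval]
  linarith [sqrt_36541_mem.1]

end ClassB1

/-- The class-B₁ lower bound: at α* = (197 − √36541)/27 the two bounds
f(α) = (213 − 2α)/(9(12 − α)) and g(α) = (26 − 9α)/12 coincide, exceed 2.0043,
f is strictly increasing and g strictly decreasing on [0,1], and the min-max
over [0,1] is attained at α*. -/
theorem stmt14 :
    let f : ℝ → ℝ := fun a => (213 - 2 * a) / (9 * (12 - a))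
    let g : ℝ → ℝ := fun a => (26 - 9 * a) / 12
    let α : ℝ := (197 - Real.sqrt 36541) / 27
    f α = g α ∧ f α > 2.0043 ∧
    StrictMonoOn f (Set.Icc 0 1) ∧ StrictAntiOn g (Set.Icc 0 1) ∧
    α ∈ Set.Icc (0 : ℝ) 1 ∧
    (∀ a ∈ Set.Icc (0 : ℝ) 1, f α ≤ max (f a) (g a)) := by
  have hmono : StrictMonoOn ClassB1.f (Set.Icc 0 1) :=
    ClassB1.strictMonoOn_f.mono fun a ha => show a < 12 by linarith [ha.2]
  have hanti : StrictAntiOn ClassB1.g (Set.Icc 0 1) := ClassB1.strictAnti_g.strictAntiOn _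
  exact ⟨ClassB1.f_αStar_eq_g_αStar, ClassB1.f_αStar_gt,
    hmono, hanti, ClassB1.αStar_mem_Icc, fun a ha =>
      hmono.monotoneOn.le_max_of_eq_of_antitoneOn hanti.antitoneOn ClassB1.αStar_mem_Icc
        ClassB1.f_αStar_eq_g_αStar ha⟩
end

section
/- For α* = (529 − √274441)/54, the functions f(α) = (85 + 79α)/(9(5 − α)) and g(α) = (26 − 9α)/12 satisfy f(α*) = g(α*), f is strictly increasing and g strictly decreasing on [0,1], and the common value f(α*) = g(α*) is strictly greater than 2.0954. -/
open Real

/-- `f α = g α` clears denominators to `27 α² - 529 α + 50 = 0`, whose smaller root is `α*`. -/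
lemma div_eq_div_of_quadratic_eq_zero {a : ℝ} (ha : a ≠ 5)
    (h : 27 * a ^ 2 - 529 * a + 50 = 0) :
    (85 + 79 * a) / (9 * (5 - a)) = (26 - 9 * a) / 12 := by
  rw [div_eq_div_iff (by intro h0; exact ha (by linarith)) (by norm_num)]
  linear_combination (-3 : ℝ) * h

lemma quadratic_eq_zero_alphaStar :
    27 * ((529 - √274441) / 54) ^ 2 - 529 * ((529 - √274441) / 54) + 50 = 0 := by
  linear_combination (1 / 108 : ℝ) * Real.sq_sqrt (show (0 : ℝ) ≤ 274441 by norm_num)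

lemma alphaStar_lt : (529 - √274441) / 54 < 0.09502 := by
  have : (523.869 : ℝ) < √274441 := by
    rw [Real.lt_sqrt (by norm_num)]
    norm_num
  linarith

lemma strictMonoOn_div_five_sub :
    StrictMonoOn (fun a : ℝ => (85 + 79 * a) / (9 * (5 - a))) (Set.Iio 5) := by
  intro a ha b hb hab
  rw [Set.mem_Iio] at ha hb
  rw [div_lt_div_iff₀ (by linarith) (by linarith)]
  nlinarith

/-- The class-B₂ lower bound: at α* = (529 − √274441)/54 the two bounds
f(α) = (85 + 79α)/(9(5 − α)) and g(α) = (26 − 9α)/12 coincide, f is strictly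
increasing and g strictly decreasing on [0,1], and the common value
exceeds 2.0954. -/
theorem stmt15 :
    let f : ℝ → ℝ := fun a => (85 + 79 * a) / (9 * (5 - a))
    let g : ℝ → ℝ := fun a => (26 - 9 * a) / 12
    let α : ℝ := (529 - Real.sqrt 274441) / 54
    f α = g α ∧
    StrictMonoOn f (Set.Icc 0 1) ∧ StrictAntiOn g (Set.Icc 0 1) ∧
    f α > 2.0954 := by
  intro f g α
  have hα_lt : α < 0.09502 := alphaStar_lt
  have hfg : f α = g α :=
    div_eq_div_of_quadratic_eq_zero (by norm_num at hα_lt ⊢; linarith) quadratic_eq_zero_alphaStar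
  have hg : StrictAnti g := fun a b hab => by dsimp only [g]; linarith
  refine ⟨hfg, strictMonoOn_div_five_sub.mono fun x hx => ?_, hg.strictAntiOn _, ?_⟩
  · exact lt_of_le_of_lt hx.2 (by norm_num)
  · rw [hfg]
    show (26 - 9 * α) / 12 > 2.0954
    norm_num at hα_lt ⊢
    linarith
end
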